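/- Let X be a Banach space, G a bounded group of invertible bounded linear operators on X, Y a subspace of X, and x ∈ X. Then the following are equivalent: (1) for every net (T_i) in G converging pointwise on Y to the identity of Y, the net (T_i x) converges to x; (2) for every net (T_i) in G converging pointwise on Y (to some map), the net (T_i x) converges. -/
import Mathlib


open Filter

/-- For a bounded group `G` of invertible bounded linear operators on a
Banach space `X`, a subspace `Y` and a point `x`, the following are equivalent:
(1) every net in `G` converging pointwise on `Y` to the identity of `Y` converges at
`x` to `x`; (2) every net in `G` converging pointwise on `Y` converges at `x`. -/
theorem korovkin_envelope_iff.{u}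
    {X : Type*} [NormedAddCommGroup X] [NormedSpace ℝ X] [CompleteSpace X]
    (G : Set (X ≃L[ℝ] X))
    (hid : ContinuousLinearEquiv.refl ℝ X ∈ G)
    (hmul : ∀ T ∈ G, ∀ U ∈ G, T.trans U ∈ G)
    (hinv : ∀ T ∈ G, T.symm ∈ G)
    (hbdd : ∃ C : ℝ, ∀ T ∈ G, ‖(T : X →L[ℝ] X)‖ ≤ C)
    (Y : Submodule ℝ X) (x : X) :
    (∀ (ι : Type u) (l : Filter ι), l.NeBot → ∀ T : ι → X ≃L[ℝ] X, (∀ i, T i ∈ G) →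
        (∀ y ∈ Y, Tendsto (fun i => T i y) l (nhds y)) →
        Tendsto (fun i => T i x) l (nhds x))
    ↔ (∀ (ι : Type u) (l : Filter ι), l.NeBot → ∀ T : ι → X ≃L[ℝ] X, (∀ i, T i ∈ G) →
        (∀ y ∈ Y, ∃ z : X, Tendsto (fun i => T i y) l (nhds z)) →
        ∃ z : X, Tendsto (fun i => T i x) l (nhds z)) := by
  obtain ⟨C, hC⟩ := hbdd
  have hCop : ∀ S ∈ G, ∀ v : X, ‖S v‖ ≤ C * ‖v‖ := by
    intro S hS v
    calc ‖S v‖ = ‖(S : X →L[ℝ] X) v‖ := by simp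
    _ ≤ ‖(S : X →L[ℝ] X)‖ * ‖v‖ := (S : X →L[ℝ] X).le_opNorm v
    _ ≤ C * ‖v‖ := mul_le_mul_of_nonneg_right (hC S hS) (norm_nonneg v)
  constructor
  · -- (1) → (2)
    intro h1 ι l hl T hTG hTY
    -- the pair net S p = (T p.2)⁻¹ ∘ (T p.1) converges pointwise on Y to id
    set S : ι × ι → X ≃L[ℝ] X := fun p => (T p.1).trans (T p.2).symm with hS
    have hSG : ∀ p, S p ∈ G := fun p => hmul _ (hTG p.1) _ (hinv _ (hTG p.2))
    haveI : (l ×ˢ l).NeBot := hl.prod hl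
    have hSY : ∀ y ∈ Y, Tendsto (fun p => S p y) (l ×ˢ l) (nhds y) := by
      intro y hy
      obtain ⟨z, hz⟩ := hTY y hy
      rw [tendsto_iff_norm_sub_tendsto_zero]
      have hdiff : Tendsto (fun p : ι × ι => T p.1 y - T p.2 y) (l ×ˢ l) (nhds 0) := by
        have := (hz.comp tendsto_fst).sub (hz.comp tendsto_snd)
        simpa using this
      have key : ∀ p : ι × ι, ‖S p y - y‖ ≤ C * ‖T p.1 y - T p.2 y‖ := by
        intro p
        have : S p y - y = (T p.2).symm (T p.1 y - T p.2 y) := by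
          simp [hS, ContinuousLinearEquiv.trans_apply, map_sub]
        rw [this]
        exact hCop _ (hinv _ (hTG p.2)) _
      have : Tendsto (fun p : ι × ι => C * ‖T p.1 y - T p.2 y‖) (l ×ˢ l) (nhds 0) := by
        have := (hdiff.norm).const_mul C
        simpa using this
      exact squeeze_zero (fun p => norm_nonneg _) key this
    have hSx : Tendsto (fun p => S p x) (l ×ˢ l) (nhds x) :=
      h1 (ι × ι) (l ×ˢ l) inferInstance S hSG hSY
    -- hence (T i x) is Cauchy
    have hcauchy : Cauchy (map (fun i => T i x) l) := by
      rw [cauchy_map_iff]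
      refine ⟨hl, ?_⟩
      rw [uniformity_eq_comap_nhds_zero, tendsto_comap_iff]
      have key : ∀ p : ι × ι, ‖T p.1 x - T p.2 x‖ ≤ C * ‖S p x - x‖ := by
        intro p
        have : T p.1 x - T p.2 x = T p.2 (S p x - x) := by
          simp [hS, ContinuousLinearEquiv.trans_apply, map_sub]
        rw [this]
        exact hCop _ (hTG p.2) _
      have h0 : Tendsto (fun p : ι × ι => C * ‖S p x - x‖) (l ×ˢ l) (nhds 0) := by
        have := ((hSx.sub (tendsto_const_nhds (x := x))).norm).const_mul C
        simpa using this
      exact squeeze_zero_norm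
        (fun p => (norm_sub_rev ((T p.1) x) ((T p.2) x) ▸ key p : _)) h0
    obtain ⟨z, hz⟩ := CompleteSpace.complete hcauchy
    exact ⟨z, hz⟩
  · -- (2) → (1)
    intro h2 ι l hl T hTG hTY
    -- augment with the identity
    set U : ι × Bool → X ≃L[ℝ] X := fun p => if p.2 then T p.1 else ContinuousLinearEquiv.refl ℝ X
      with hU
    have hUG : ∀ p, U p ∈ G := by
      intro p; by_cases h : p.2 <;> simp [hU, h, hid, hTG]
    haveI : (l ×ˢ (⊤ : Filter Bool)).NeBot := hl.prod ((pure_neBot (a := true)).mono le_top)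
    have hUY : ∀ y ∈ Y, ∃ z : X, Tendsto (fun p => U p y) (l ×ˢ (⊤ : Filter Bool)) (nhds z) := by
      intro y hy
      refine ⟨y, ?_⟩
      have h0 : Tendsto (fun p : ι × Bool => ‖T p.1 y - y‖) (l ×ˢ (⊤ : Filter Bool)) (nhds 0) := by
        have := ((hTY y hy).comp (tendsto_fst (f := l) (g := (⊤ : Filter Bool)))).sub
          (tendsto_const_nhds (x := y))
        simpa using this.norm
      have hbound : ∀ p : ι × Bool, ‖U p y - y‖ ≤ ‖T p.1 y - y‖ := by
        intro p
        by_cases hb : p.2 <;> simp [hU, hb]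
      have := squeeze_zero_norm hbound h0
      exact tendsto_sub_nhds_zero_iff.mp this
    obtain ⟨z, hz⟩ := h2 (ι × Bool) (l ×ˢ (⊤ : Filter Bool)) inferInstance U hUG hUY
    -- restrict to the identity part: z = x
    have hmapf : Tendsto (fun i : ι => ((i, false) : ι × Bool)) l (l ×ˢ (⊤ : Filter Bool)) :=
      tendsto_id.prodMk tendsto_top
    have hmapt : Tendsto (fun i : ι => ((i, true) : ι × Bool)) l (l ×ˢ (⊤ : Filter Bool)) :=
      tendsto_id.prodMk tendsto_top
    have hfalse : Tendsto (fun i : ι => U (i, false) x) l (nhds z) := hz.comp hmapf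
    have hzx : z = x := by
      have : Tendsto (fun _ : ι => x) l (nhds z) := by simpa [hU] using hfalse
      exact tendsto_nhds_unique this tendsto_const_nhds
    have htrue : Tendsto (fun i : ι => U (i, true) x) l (nhds z) := hz.comp hmapt
    rw [hzx] at htrue
    simpa [hU] using htrue
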